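/- Fix k ≥ 1 and constants α_k ∈ ℝ. Let S, T : [0,∞) → L(H) be semigroup families with T(s) contractions commuting with the closed operator G^k on D(G^k), and ‖G^k S(t)φ‖ ≤ e^{α_k t}‖G^k φ‖ for φ ∈ D(G^k). If for some t ≥ 0 the Trotter products (S(t/n) T(t/n))^n φ converge strongly in H to P(t)φ for every φ ∈ H, then P(t) maps D(G^k) into D(G^k) and ‖G^k P(t) φ‖ ≤ e^{α_k t} ‖G^k φ‖ for all φ ∈ D(G^k). -/

import Mathlib

/-!
Each Trotter step `S(t/n) T(t/n)` maps `D(G^k)` into itself and multiplies `‖G^k ·‖` by at most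
`e^{α_k t/n}`, so the Trotter products `u_n` stay in `D(G^k)` with
`‖G^k u_n‖ ≤ e^{α_k t}‖G^k φ‖`. By Banach–Alaoglu (transported to `H` by the Riesz map) the bounded
sequence `G^k u_n` has a weak cluster point `y` with the same bound, and since `u_n → P(t)φ`
strongly, `(P(t)φ, y)` is a weak cluster point of `(u_n, G^k u_n)`. The graph of `G^k` is closed
and convex, hence weakly closed by Hahn–Banach, so `P(t)φ ∈ D(G^k)` and `G^k P(t)φ = y`.
-/

open Filter Topology Set

theorem Function.iterate_smul_add_smul {R M : Type*} [Semiring R] [AddCommMonoid M] [Module R M]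
    {D : Submodule R M} {G : M → M} (hadd : ∀ x ∈ D, ∀ y ∈ D, G (x + y) = G x + G y)
    (hsmul : ∀ (c : R), ∀ x ∈ D, G (c • x) = c • G x) {k : ℕ} {x y : M}
    (hx : ∀ i < k, G^[i] x ∈ D) (hy : ∀ i < k, G^[i] y ∈ D) (a b : R) :
    ∀ i ≤ k, G^[i] (a • x + b • y) = a • G^[i] x + b • G^[i] y
  | 0, _ => rfl
  | i + 1, hi => by
    have hik : i < k := hi
    rw [iterate_succ_apply', iterate_succ_apply', iterate_succ_apply',
      Function.iterate_smul_add_smul hadd hsmul hx hy a b i hik.le,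
      hadd _ (D.smul_mem a (hx i hik)) _ (D.smul_mem b (hy i hik)),
      hsmul _ _ (hx i hik), hsmul _ _ (hy i hik)]

theorem convex_graphOn_iterate {𝕜 M : Type*} [Semiring 𝕜] [PartialOrder 𝕜] [AddCommMonoid M]
    [Module 𝕜 M] {D : Submodule 𝕜 M} {G : M → M}
    (hadd : ∀ x ∈ D, ∀ y ∈ D, G (x + y) = G x + G y)
    (hsmul : ∀ (c : 𝕜), ∀ x ∈ D, G (c • x) = c • G x) (k : ℕ) :
    Convex 𝕜 ({x | ∀ i < k, G^[i] x ∈ D}.graphOn G^[k]) := by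
  rintro _ ⟨x, hx, rfl⟩ _ ⟨y, hy, rfl⟩ a b - - -
  have hlin := Function.iterate_smul_add_smul hadd hsmul hx hy a b
  refine ⟨a • x + b • y, fun i hi => ?_, ?_⟩
  · rw [hlin i hi.le]
    exact D.add_mem (D.smul_mem a (hx i hi)) (D.smul_mem b (hy i hi))
  · simp [hlin k le_rfl]

theorem isClosed_graphOn_of_tendsto {X Y : Type*} [TopologicalSpace X] [FirstCountableTopology X]
    [TopologicalSpace Y] [FirstCountableTopology Y] {A : Set X} {f : X → Y}
    (hf : ∀ (u : ℕ → X) (x : X) (y : Y), (∀ n, u n ∈ A) → Tendsto u atTop (𝓝 x) →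
      Tendsto (f ∘ u) atTop (𝓝 y) → x ∈ A ∧ f x = y) :
    IsClosed (A.graphOn f) := by
  refine IsSeqClosed.isClosed fun v p hv hvp => ?_
  choose u huA hvu using hv
  obtain rfl : (fun n => (u n, f (u n))) = v := funext hvu
  exact mem_graphOn.2 (hf u p.1 p.2 huA hvp.fst_nhds hvp.snd_nhds)

theorem norm_iterate_le_pow_mul {X E : Type*} [SeminormedAddCommGroup E] {A : Set X}
    {W : X → X} {g : X → E} {c : ℝ} (hc : 0 ≤ c) (hWA : MapsTo W A A)
    (hW : ∀ φ ∈ A, ‖g (W φ)‖ ≤ c * ‖g φ‖) {φ : X} (hφ : φ ∈ A) :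
    ∀ n : ℕ, ‖g (W^[n] φ)‖ ≤ c ^ n * ‖g φ‖
  | 0 => by simp
  | n + 1 => calc
      ‖g (W^[n + 1] φ)‖ ≤ c * ‖g (W^[n] φ)‖ := by
        rw [Function.iterate_succ_apply']
        exact hW _ (hWA.iterate n hφ)
      _ ≤ c * (c ^ n * ‖g φ‖) := by gcongr; exact norm_iterate_le_pow_mul hc hWA hW hφ n
      _ = c ^ (n + 1) * ‖g φ‖ := by ring

theorem Filter.Tendsto.mapClusterPt_prodMk {α X Y : Type*} [TopologicalSpace X]
    [TopologicalSpace Y] {l : Filter α} {u : α → X} {w : α → Y} {x : X} {y : Y}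
    (hu : Tendsto u l (𝓝 x)) (hw : MapClusterPt y l w) :
    MapClusterPt (x, y) l fun a => (u a, w a) := by
  rw [((𝓝 x).basis_sets.prod_nhds (𝓝 y).basis_sets).mapClusterPt_iff_frequently]
  rintro ⟨s, t⟩ ⟨hs, ht⟩
  exact ((mapClusterPt_iff_frequently.1 hw t ht).and_eventually (hu hs)).mono fun _ h => ⟨h.2, h.1⟩

theorem Filter.Tendsto.mapClusterPt_apply_prodMk {R E F α : Type*} [Semiring R]
    [TopologicalSpace R] [ContinuousAdd R] [TopologicalSpace E] [AddCommMonoid E] [Module R E]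
    [TopologicalSpace F] [AddCommMonoid F] [Module R F] {l : Filter α} {u : α → E} {w : α → F}
    {x : E} {y : F} (hu : Tendsto u l (𝓝 x))
    (hw : ∀ g : StrongDual R F, MapClusterPt (g y) l (g ∘ w)) (f : StrongDual R (E × F)) :
    MapClusterPt (f (x, y)) l fun a => f (u a, w a) := by
  have hpair := ((f.comp (.inl R E F)).continuous.tendsto x |>.comp hu).mapClusterPt_prodMk
    (hw (f.comp (.inr R E F)))
  simpa only [← f.comp_inl_add_comp_inr, Function.comp_def] using
    hpair.continuousAt_comp continuous_add.continuousAt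

theorem mem_of_forall_mapClusterPt_apply {E : Type*} [TopologicalSpace E] [AddCommGroup E]
    [IsTopologicalAddGroup E] [Module ℝ E] [ContinuousSMul ℝ E] [LocallyConvexSpace ℝ E]
    {K : Set E} (hKc : Convex ℝ K) (hKcl : IsClosed K) {α : Type*} {l : Filter α} {v : α → E}
    (hv : ∀ᶠ a in l, v a ∈ K) {p : E}
    (hp : ∀ f : StrongDual ℝ E, MapClusterPt (f p) l (f ∘ v)) : p ∈ K := by
  by_contra hpK
  obtain ⟨f, c, hfK, hcp⟩ := geometric_hahn_banach_closed_point hKc hKcl hpK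
  have hpc : f p ≤ c := isClosed_Iic.mem_of_mapClusterPt (hp f) (hv.mono fun a ha => (hfK _ ha).le)
  exact (hpc.trans_lt hcp).false

theorem exists_norm_le_forall_mapClusterPt_apply {H : Type*} [NormedAddCommGroup H]
    [InnerProductSpace ℝ H] [CompleteSpace H] {α : Type*} {l : Filter α} [l.NeBot] {w : α → H}
    {C : ℝ} (hw : ∀ᶠ a in l, ‖w a‖ ≤ C) :
    ∃ y, ‖y‖ ≤ C ∧ ∀ f : StrongDual ℝ H, MapClusterPt (f y) l (f ∘ w) := by
  let toWeak : H → WeakDual ℝ H := fun z => StrongDual.toWeakDual (InnerProductSpace.toDual ℝ H z)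
  have hball : ∀ᶠ a in l, toWeak (w a) ∈ WeakDual.toStrongDual ⁻¹' Metric.closedBall 0 C :=
    hw.mono fun a ha => by simpa [toWeak] using ha
  obtain ⟨F, hFC, hF⟩ :=
    (WeakDual.isCompact_closedBall 0 C).exists_mapClusterPt (le_principal_iff.2 hball)
  refine ⟨(InnerProductSpace.toDual ℝ H).symm (WeakDual.toStrongDual F), by simpa using hFC,
    fun f => ?_⟩
  obtain ⟨z, rfl⟩ := (InnerProductSpace.toDual ℝ H).surjective f
  have hFz := hF.continuousAt_comp (WeakDual.eval_continuous z).continuousAt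
  rw [InnerProductSpace.toDual_apply_apply, real_inner_comm, InnerProductSpace.toDual_symm_apply]
  simpa [toWeak, Function.comp_def, real_inner_comm z] using hFz

theorem stmt19_general {H : Type*} [NormedAddCommGroup H] [InnerProductSpace ℝ H] [CompleteSpace H]
    (D : Submodule ℝ H) (G : H → H) (k : ℕ) (αk : ℝ)
    (hadd : ∀ x ∈ D, ∀ y ∈ D, G (x + y) = G x + G y)
    (hsmul : ∀ (c : ℝ), ∀ x ∈ D, G (c • x) = c • G x)
    -- closedness of `G^k` (with domain `D(G^k) = {x | G^[i] x ∈ D(G) for i < k}`)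
    (hGkclosed : ∀ (u : ℕ → H) (x y : H), (∀ n, ∀ i < k, G^[i] (u n) ∈ D) →
      Tendsto u atTop (𝓝 x) → Tendsto (fun n => G^[k] (u n)) atTop (𝓝 y) →
      (∀ i < k, G^[i] x ∈ D) ∧ G^[k] x = y)
    (S T : ℝ → H →L[ℝ] H) (t : ℝ) (ht : 0 ≤ t)
    (hSmap : ∀ s ≥ (0:ℝ), ∀ φ : H, (∀ i < k, G^[i] φ ∈ D) →
      (∀ i < k, G^[i] (S s φ) ∈ D) ∧ ‖G^[k] (S s φ)‖ ≤ Real.exp (αk * s) * ‖G^[k] φ‖)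
    (hTcontr : ∀ s ≥ (0:ℝ), ∀ ψ : H, ‖T s ψ‖ ≤ ‖ψ‖)
    (hTmap : ∀ s ≥ (0:ℝ), ∀ φ : H, (∀ i < k, G^[i] φ ∈ D) →
      (∀ i < k, G^[i] (T s φ) ∈ D) ∧ G^[k] (T s φ) = T s (G^[k] φ))
    (Pt : H → H)
    (hconv : ∀ φ : H, Tendsto (fun n : ℕ => (fun ψ => S (t / n) (T (t / n) ψ))^[n] φ)
      atTop (𝓝 (Pt φ))) :
    ∀ φ : H, (∀ i < k, G^[i] φ ∈ D) →
      (∀ i < k, G^[i] (Pt φ) ∈ D) ∧ ‖G^[k] (Pt φ)‖ ≤ Real.exp (αk * t) * ‖G^[k] φ‖ := by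
  intro φ hφ
  set A : Set H := {x | ∀ i < k, G^[i] x ∈ D}
  let trotter (n : ℕ) : H → H := fun ψ => S (t / n) (T (t / n) ψ)
  have htrotter (n : ℕ) : MapsTo (trotter n) A A ∧
      ∀ ψ ∈ A, ‖G^[k] (trotter n ψ)‖ ≤ Real.exp (αk * (t / n)) * ‖G^[k] ψ‖ := by
    have hs : 0 ≤ t / n := by positivity
    refine ⟨fun ψ hψ => (hSmap _ hs _ (hTmap _ hs ψ hψ).1).1, fun ψ hψ => ?_⟩
    calc ‖G^[k] (trotter n ψ)‖ ≤ Real.exp (αk * (t / n)) * ‖G^[k] (T (t / n) ψ)‖ :=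
          (hSmap _ hs _ (hTmap _ hs ψ hψ).1).2
      _ ≤ Real.exp (αk * (t / n)) * ‖G^[k] ψ‖ := by
          rw [(hTmap _ hs ψ hψ).2]; gcongr; exact hTcontr _ hs _
  have hbound :
      ∀ᶠ n : ℕ in atTop, ‖G^[k] ((trotter n)^[n] φ)‖ ≤ Real.exp (αk * t) * ‖G^[k] φ‖ := by
    filter_upwards [eventually_ne_atTop 0] with n hn
    have hiter := norm_iterate_le_pow_mul (Real.exp_pos _).le (htrotter n).1 (htrotter n).2 hφ n
    have hexp : (n : ℝ) * (αk * (t / n)) = αk * t := by field_simp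
    rwa [← Real.exp_nat_mul, hexp] at hiter
  obtain ⟨y, hy, hwy⟩ := exists_norm_le_forall_mapClusterPt_apply hbound
  have hgraph : (Pt φ, y) ∈ A.graphOn G^[k] :=
    mem_of_forall_mapClusterPt_apply (convex_graphOn_iterate hadd hsmul k)
      (isClosed_graphOn_of_tendsto hGkclosed)
      (Eventually.of_forall fun n => mem_graphOn.2 ⟨(htrotter n).1.iterate n hφ, rfl⟩)
      ((hconv φ).mapClusterPt_apply_prodMk hwy)
  obtain ⟨hPt, hGPt⟩ := mem_graphOn.1 hgraph
  exact ⟨hPt, hGPt ▸ hy⟩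

/-- Trotter limits preserve the `G^k`-estimate: if `‖G^k S(t)φ‖ ≤ e^{α_k t}‖G^k φ‖` on
`D(G^k)`, each `T(s)` is a contraction commuting with `G^k` on `D(G^k)`, `G^k` is closed, and
the Trotter products `(S(t/n) T(t/n))^n φ` converge strongly to `P(t)φ` for every `φ`, then
`P(t)` maps `D(G^k)` into `D(G^k)` with `‖G^k P(t)φ‖ ≤ e^{α_k t}‖G^k φ‖`. -/
theorem stmt19 {H : Type*} [NormedAddCommGroup H] [InnerProductSpace ℝ H] [CompleteSpace H]
    (D : Submodule ℝ H) (G : H → H) (k : ℕ) (hk : 1 ≤ k) (αk : ℝ)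
    (hadd : ∀ x ∈ D, ∀ y ∈ D, G (x + y) = G x + G y)
    (hsmul : ∀ (c : ℝ), ∀ x ∈ D, G (c • x) = c • G x)
    -- closedness of `G^k` (with domain `D(G^k) = {x | G^[i] x ∈ D(G) for i < k}`)
    (hGkclosed : ∀ (u : ℕ → H) (x y : H), (∀ n, ∀ i < k, G^[i] (u n) ∈ D) →
      Tendsto u atTop (𝓝 x) → Tendsto (fun n => G^[k] (u n)) atTop (𝓝 y) →
      (∀ i < k, G^[i] x ∈ D) ∧ G^[k] x = y)
    (S T : ℝ → H →L[ℝ] H) (t : ℝ) (ht : 0 ≤ t)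
    (hSmap : ∀ s ≥ (0:ℝ), ∀ φ : H, (∀ i < k, G^[i] φ ∈ D) →
      (∀ i < k, G^[i] (S s φ) ∈ D) ∧ ‖G^[k] (S s φ)‖ ≤ Real.exp (αk * s) * ‖G^[k] φ‖)
    (hTcontr : ∀ s ≥ (0:ℝ), ∀ ψ : H, ‖T s ψ‖ ≤ ‖ψ‖)
    (hTmap : ∀ s ≥ (0:ℝ), ∀ φ : H, (∀ i < k, G^[i] φ ∈ D) →
      (∀ i < k, G^[i] (T s φ) ∈ D) ∧ G^[k] (T s φ) = T s (G^[k] φ))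
    (Pt : H → H)
    (hconv : ∀ φ : H, Tendsto (fun n : ℕ => (fun ψ => S (t / n) (T (t / n) ψ))^[n] φ)
      atTop (𝓝 (Pt φ))) :
    ∀ φ : H, (∀ i < k, G^[i] φ ∈ D) →
      (∀ i < k, G^[i] (Pt φ) ∈ D) ∧ ‖G^[k] (Pt φ)‖ ≤ Real.exp (αk * t) * ‖G^[k] φ‖ :=
  stmt19_general D G k αk hadd hsmul hGkclosed S T t ht hSmap hTcontr hTmap Pt hconv
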